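/- Fix constants C_a, C_b, C_{cd} > 0. Then for every ε > 0 there exist l_ε, u_ε ∈ (0,1), depending only on ε, C_a, C_b, C_{cd}, such that for all parameters a ∈ [1/C_a, C_a], b with |b| ≤ C_b, and 0 ≤ c < d ≤ 1 with d − c ∈ [1/C_{cd}, C_{cd}]: P(θ) − c ≤ ε for all θ ∈ (0, l_ε], and d − P(θ) ≤ ε for all θ ∈ [u_ε, 1). In particular, the family of transformed 4PL IRFs with such parameters satisfies the uniform tail condition with lower limit c and upper limit d. -/

import Mathlib

/-!
Since `0 ≤ c` and `d ≤ 1`, `P(θ) - c ≤ g(a(Φ⁻¹(θ) - b))` and, by `1 - g(t) = g(-t)`,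
`d - P(θ) ≤ g(a(b - Φ⁻¹(θ)))`; moreover `g(t) ≤ eᵗ`. With `L = min 0 (log ε)`, the bounds
`a ≥ 1/C_a` and `|b| ≤ C_b` push both arguments of `g` below `L` once `Φ⁻¹(θ) ≤ C_a L - C_b`,
respectively `Φ⁻¹(θ) ≥ C_b - C_a L`. As `Φ` is the CDF of `gaussianReal 0 1`, it is a continuous
strictly increasing bijection `ℝ → (0,1)` inverted by `Φ⁻¹`, so `l = Φ(C_a L - C_b)` and
`u = Φ(C_b - C_a L)` work.
-/

open Set Filter Topology MeasureTheory

/-- The standard normal density `φ(x) = (2π)^{-1/2} exp(-x²/2)`. -/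
noncomputable def stdNormalPDF (x : ℝ) : ℝ :=
  (Real.sqrt (2 * Real.pi))⁻¹ * Real.exp (-(x ^ 2) / 2)

/-- The standard normal CDF `Φ(x) = ∫_{-∞}^x φ`. -/
noncomputable def stdNormalCDF (x : ℝ) : ℝ :=
  ∫ t in Set.Iic x, stdNormalPDF t

/-- The inverse `Φ⁻¹ : (0,1) → ℝ` of the standard normal CDF. -/
noncomputable def stdNormalCDFInv : ℝ → ℝ :=
  Function.invFun stdNormalCDF

/-- The transformed normal-ogive item response function
`P_{a,b}(θ) = Φ(a(Φ⁻¹(θ) − b))`. -/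
noncomputable def ogiveIRF (a b θ : ℝ) : ℝ :=
  stdNormalCDF (a * (stdNormalCDFInv θ - b))

/-- The derivative of the transformed normal-ogive item response function,
`P'_{a,b}(θ) = a·φ(a(Φ⁻¹(θ) − b))/φ(Φ⁻¹(θ))`. -/
noncomputable def ogiveIRFDeriv (a b θ : ℝ) : ℝ :=
  a * stdNormalPDF (a * (stdNormalCDFInv θ - b)) / stdNormalPDF (stdNormalCDFInv θ)

/-- The standard logistic function `g(x) = eˣ/(1+eˣ)`. -/
noncomputable def logisticFn (x : ℝ) : ℝ :=
  Real.exp x / (1 + Real.exp x)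

/-- The derivative of the standard logistic function, `g'(x) = eˣ/(1+eˣ)²`. -/
noncomputable def logisticFnDeriv (x : ℝ) : ℝ :=
  Real.exp x / (1 + Real.exp x) ^ 2

/-- The transformed four-parameter logistic (4PL) item response function
`P(θ) = c + (d−c)·g(a(Φ⁻¹(θ) − b))`. -/
noncomputable def fourPL (a b c d θ : ℝ) : ℝ :=
  c + (d - c) * logisticFn (a * (stdNormalCDFInv θ - b))

/-- The derivative of the transformed 4PL item response function,
`P'(θ) = (d−c)·a·g'(a(Φ⁻¹(θ) − b))/φ(Φ⁻¹(θ))`. -/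
noncomputable def fourPLDeriv (a b c d θ : ℝ) : ℝ :=
  (d - c) * a * logisticFnDeriv (a * (stdNormalCDFInv θ - b)) /
    stdNormalPDF (stdNormalCDFInv θ)

open ProbabilityTheory

lemma stdNormalPDF_eq_gaussianPDFReal : stdNormalPDF = gaussianPDFReal 0 1 := by
  ext x
  simp [stdNormalPDF, gaussianPDFReal, neg_div]

lemma stdNormalCDF_eq_cdf_gaussianReal (x : ℝ) :
    stdNormalCDF x = cdf (gaussianReal 0 1) x := by
  rw [cdf_eq_real, measureReal_def, gaussianReal_apply_eq_integral _ one_ne_zero,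
    ENNReal.toReal_ofReal (setIntegral_nonneg measurableSet_Iic
      fun t _ => gaussianPDFReal_nonneg 0 1 t), stdNormalCDF, stdNormalPDF_eq_gaussianPDFReal]

lemma stdNormalCDF_sub_stdNormalCDF (x y : ℝ) :
    stdNormalCDF y - stdNormalCDF x = ∫ t in x..y, stdNormalPDF t := by
  simp only [stdNormalCDF, stdNormalPDF_eq_gaussianPDFReal]
  exact intervalIntegral.integral_Iic_sub_Iic (integrable_gaussianPDFReal 0 1).integrableOn
    (integrable_gaussianPDFReal 0 1).integrableOn

lemma stdNormalCDF_strictMono : StrictMono stdNormalCDF := fun x y hxy => by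
  have hpos := intervalIntegral.intervalIntegral_pos_of_pos
    (integrable_gaussianPDFReal 0 1).intervalIntegrable
    (fun t => gaussianPDFReal_pos 0 1 t one_ne_zero) hxy
  rw [← stdNormalPDF_eq_gaussianPDFReal, ← stdNormalCDF_sub_stdNormalCDF] at hpos
  linarith

lemma continuous_stdNormalCDF : Continuous stdNormalCDF := by
  have h := ((integrable_gaussianPDFReal 0 1).continuous_primitive 0).const_add (stdNormalCDF 0)
  refine h.congr fun y => ?_
  rw [← stdNormalPDF_eq_gaussianPDFReal, ← stdNormalCDF_sub_stdNormalCDF, add_sub_cancel]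

lemma tendsto_stdNormalCDF_atBot : Tendsto stdNormalCDF atBot (𝓝 0) := by
  simpa only [← funext stdNormalCDF_eq_cdf_gaussianReal] using
    tendsto_cdf_atBot (gaussianReal 0 1)

lemma tendsto_stdNormalCDF_atTop : Tendsto stdNormalCDF atTop (𝓝 1) := by
  simpa only [← funext stdNormalCDF_eq_cdf_gaussianReal] using
    tendsto_cdf_atTop (gaussianReal 0 1)

lemma stdNormalCDF_mem_Ioo (x : ℝ) : stdNormalCDF x ∈ Ioo 0 1 :=
  ⟨(stdNormalCDF_strictMono.monotone.le_of_tendsto tendsto_stdNormalCDF_atBot (x - 1)).trans_lt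
      (stdNormalCDF_strictMono (sub_one_lt x)),
    (stdNormalCDF_strictMono (lt_add_one x)).trans_le
      (stdNormalCDF_strictMono.monotone.ge_of_tendsto tendsto_stdNormalCDF_atTop (x + 1))⟩

lemma stdNormalCDF_stdNormalCDFInv {θ : ℝ} (hθ : θ ∈ Ioo 0 1) :
    stdNormalCDF (stdNormalCDFInv θ) = θ :=
  Function.invFun_eq <| mem_range_of_exists_le_of_exists_ge continuous_stdNormalCDF
    (tendsto_stdNormalCDF_atBot.eventually (eventually_le_nhds hθ.1)).exists
    (tendsto_stdNormalCDF_atTop.eventually (eventually_ge_nhds hθ.2)).exists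

lemma stdNormalCDFInv_le_of_le_stdNormalCDF {θ x : ℝ} (hθ : 0 < θ) (h : θ ≤ stdNormalCDF x) :
    stdNormalCDFInv θ ≤ x := by
  rw [← stdNormalCDF_strictMono.le_iff_le,
    stdNormalCDF_stdNormalCDFInv ⟨hθ, h.trans_lt (stdNormalCDF_mem_Ioo x).2⟩]
  exact h

lemma le_stdNormalCDFInv_of_stdNormalCDF_le {θ x : ℝ} (hθ : θ < 1) (h : stdNormalCDF x ≤ θ) :
    x ≤ stdNormalCDFInv θ := by
  rw [← stdNormalCDF_strictMono.le_iff_le,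
    stdNormalCDF_stdNormalCDFInv ⟨(stdNormalCDF_mem_Ioo x).1.trans_le h, hθ⟩]
  exact h

lemma logisticFn_nonneg (t : ℝ) : 0 ≤ logisticFn t := by
  unfold logisticFn; positivity

lemma logisticFn_neg (t : ℝ) : logisticFn (-t) = 1 - logisticFn t := by
  unfold logisticFn
  rw [Real.exp_neg]
  field_simp
  ring

lemma logisticFn_le_of_le_log {t ε : ℝ} (hε : 0 < ε) (ht : t ≤ Real.log ε) :
    logisticFn t ≤ ε :=
  calc logisticFn t ≤ Real.exp t := div_le_self (Real.exp_pos t).le (by linarith [Real.exp_pos t])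
    _ ≤ ε := by rwa [← Real.exp_le_exp, Real.exp_log hε] at ht

lemma fourPL_sub_le_logisticFn {a b c d θ : ℝ} (hc : 0 ≤ c) (hd : d ≤ 1) :
    fourPL a b c d θ - c ≤ logisticFn (a * (stdNormalCDFInv θ - b)) := by
  rw [fourPL, add_sub_cancel_left]
  exact mul_le_of_le_one_left (logisticFn_nonneg _) (by linarith)

lemma sub_fourPL_le_logisticFn {a b c d θ : ℝ} (hc : 0 ≤ c) (hd : d ≤ 1) :
    d - fourPL a b c d θ ≤ logisticFn (a * (b - stdNormalCDFInv θ)) := by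
  have hreflect : d - fourPL a b c d θ = (d - c) * logisticFn (a * (b - stdNormalCDFInv θ)) := by
    rw [fourPL, ← neg_sub (stdNormalCDFInv θ) b, mul_neg, logisticFn_neg]
    ring
  rw [hreflect]
  exact mul_le_of_le_one_left (logisticFn_nonneg _) (by linarith)

lemma mul_le_of_le_mul_of_one_div_le {C a y L : ℝ} (hC : 0 < C) (ha : 1 / C ≤ a) (hL : L ≤ 0)
    (hy : y ≤ C * L) : a * y ≤ L :=
  calc a * y ≤ 1 / C * y :=
        mul_le_mul_of_nonpos_right ha (hy.trans (mul_nonpos_of_nonneg_of_nonpos hC.le hL))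
    _ ≤ 1 / C * (C * L) := by gcongr
    _ = L := by field_simp

theorem fourPL_uniform_tail_condition_general (Ca Cb Ccd : ℝ) (hCa : 0 < Ca) :
    ∀ ε : ℝ, 0 < ε →
      ∃ l u : ℝ, l ∈ Set.Ioo (0 : ℝ) 1 ∧ u ∈ Set.Ioo (0 : ℝ) 1 ∧
        ∀ a b c d : ℝ, a ∈ Set.Icc (1 / Ca) Ca → |b| ≤ Cb →
          0 ≤ c → c < d → d ≤ 1 → d - c ∈ Set.Icc (1 / Ccd) Ccd →
          (∀ θ ∈ Set.Ioc (0 : ℝ) l, fourPL a b c d θ - c ≤ ε) ∧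
          (∀ θ ∈ Set.Ico u (1 : ℝ), d - fourPL a b c d θ ≤ ε) := by
  intro ε hε
  set L := min 0 (Real.log ε)
  set x₀ := Ca * L - Cb
  refine ⟨stdNormalCDF x₀, stdNormalCDF (-x₀), stdNormalCDF_mem_Ioo _, stdNormalCDF_mem_Ioo _, ?_⟩
  intro a b c d ha hb hc _ hd _
  have hlogistic : ∀ y ≤ Ca * L, logisticFn (a * y) ≤ ε := fun y hy =>
    logisticFn_le_of_le_log hε <|
      (mul_le_of_le_mul_of_one_div_le hCa ha.1 (min_le_left _ _) hy).trans (min_le_right _ _)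
  obtain ⟨hb₁, hb₂⟩ := abs_le.1 hb
  constructor
  · rintro θ ⟨hθ₀, hθl⟩
    have hinv := stdNormalCDFInv_le_of_le_stdNormalCDF hθ₀ hθl
    exact (fourPL_sub_le_logisticFn hc hd).trans (hlogistic _ (by linarith))
  · rintro θ ⟨huθ, hθ₁⟩
    have hinv := le_stdNormalCDFInv_of_stdNormalCDF_le hθ₁ huθ
    exact (sub_fourPL_le_logisticFn hc hd).trans (hlogistic _ (by linarith))

/-- Proposition 2(ii), Condition (T) part: for `C_a, C_b, C_{cd} > 0`, the family of
transformed 4PL IRFs with `a ∈ [1/C_a, C_a]`, `|b| ≤ C_b`, and `0 ≤ c < d ≤ 1` with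
`d − c ∈ [1/C_{cd}, C_{cd}]` satisfies the uniform tail condition with lower limit `c`
and upper limit `d`: for every `ε > 0` there exist `l_ε, u_ε ∈ (0,1)` such that
`P(θ) − c ≤ ε` on `(0, l_ε]` and `d − P(θ) ≤ ε` on `[u_ε, 1)`. -/
theorem fourPL_uniform_tail_condition (Ca Cb Ccd : ℝ)
    (hCa : 0 < Ca) (hCb : 0 < Cb) (hCcd : 0 < Ccd) :
    ∀ ε : ℝ, 0 < ε →
      ∃ l u : ℝ, l ∈ Set.Ioo (0 : ℝ) 1 ∧ u ∈ Set.Ioo (0 : ℝ) 1 ∧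
        ∀ a b c d : ℝ, a ∈ Set.Icc (1 / Ca) Ca → |b| ≤ Cb →
          0 ≤ c → c < d → d ≤ 1 → d - c ∈ Set.Icc (1 / Ccd) Ccd →
          (∀ θ ∈ Set.Ioc (0 : ℝ) l, fourPL a b c d θ - c ≤ ε) ∧
          (∀ θ ∈ Set.Ico u (1 : ℝ), d - fourPL a b c d θ ≤ ε) :=
  fourPL_uniform_tail_condition_general Ca Cb Ccd hCa
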